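/- arXiv:2404.03848 — 6 statements merged into one kernel-verified Lean document; each statement's English description precedes it below -/
import Mathlib

section
/- Let T be a Hausdorff topological group acting continuously on a locally compact Hausdorff space X (not necessarily compact), and let H be a co-compact closed subgroup of T. If x ∈ X is almost periodic for the restricted action of H, then the orbit closure cl(T·x) is compact and is a minimal set for the action of T (every T-orbit in cl(T·x) is dense in cl(T·x)). -/
/-!
Almost periodicity of `x` under `H` covers `C = cl(H·x)` by `L • U` for a compact `L ⊆ H` and any
compact neighbourhood `U` of `x`. Hence `C` is compact, and pulling a point `c ∈ C` back into `U`
shows that `x ∈ cl(H·c)`. Since `T ⧸ H` is compact and `C` is `H`-invariant, the tube lemma lets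
finitely many open sets control all translates `g • C` at once; so `T • C` is closed, hence equal
to `cl(T·x)`, and compact. Finally every `y ∈ cl(T·x)` is `g • c` with `c ∈ C`, and then
`x ∈ cl(H·c) ⊆ cl(T·y)`.
-/

open MulAction Pointwise

/-- A subset `A` of a topological group `G` is *syndetic* if `K⁻¹ * A = G`
for some compact set `K ⊆ G`. -/
def Syndetic {G : Type*} [Group G] [TopologicalSpace G] (A : Set G) : Prop :=
  ∃ K : Set G, IsCompact K ∧ K⁻¹ * A = Set.univ

/-- A point `x` is *almost periodic* for the action of `G` if for every neighborhood `U`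
of `x` the return-time set `{g | g • x ∈ U}` is syndetic in `G`. -/
def IsAlmostPeriodicPt (G : Type*) {X : Type*} [Group G] [TopologicalSpace G]
    [TopologicalSpace X] [MulAction G X] (x : X) : Prop :=
  ∀ U ∈ nhds x, Syndetic {g : G | g • x ∈ U}

open Filter Topology

section AlmostPeriodic

variable {G X : Type*} [Group G] [TopologicalSpace G] [TopologicalSpace X] [MulAction G X]

theorem IsAlmostPeriodicPt.exists_isCompact_orbit_subset {x : X} (hx : IsAlmostPeriodicPt G x)
    {U : Set X} (hU : U ∈ 𝓝 x) : ∃ K : Set G, IsCompact K ∧ orbit G x ⊆ K⁻¹ • U := by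
  obtain ⟨K, hK, hKU⟩ := hx U hU
  refine ⟨K, hK, ?_⟩
  rintro _ ⟨g, rfl⟩
  obtain ⟨k, hk, a, ha, rfl⟩ : g ∈ K⁻¹ * {g : G | g • x ∈ U} := hKU ▸ Set.mem_univ g
  change (k * a) • x ∈ _
  rw [mul_smul]
  exact Set.smul_mem_smul hk ha

variable [ContinuousInv G] [ContinuousSMul G X] [T2Space X]

theorem IsAlmostPeriodicPt.exists_isCompact_closure_orbit_subset {x : X}
    (hx : IsAlmostPeriodicPt G x) {U : Set X} (hU : U ∈ 𝓝 x) (hUc : IsCompact U) :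
    ∃ K : Set G, IsCompact K ∧ closure (orbit G x) ⊆ K • U := by
  obtain ⟨K, hK, hKU⟩ := hx.exists_isCompact_orbit_subset hU
  exact ⟨K⁻¹, hK.inv, closure_minimal hKU (hK.inv.smul_set hUc).isClosed⟩

theorem IsAlmostPeriodicPt.isCompact_closure_orbit [WeaklyLocallyCompactSpace X] {x : X}
    (hx : IsAlmostPeriodicPt G x) :
    IsCompact (closure (orbit G x)) := by
  obtain ⟨U, hUc, hU⟩ := exists_compact_mem_nhds x
  obtain ⟨K, hK, hKU⟩ := hx.exists_isCompact_closure_orbit_subset hU hUc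
  exact (hK.smul_set hUc).of_isClosed_subset isClosed_closure hKU

theorem IsAlmostPeriodicPt.mem_closure_orbit_of_mem_closure_orbit [LocallyCompactSpace X] {x y : X}
    (hx : IsAlmostPeriodicPt G x) (hy : y ∈ closure (orbit G x)) :
    x ∈ closure (orbit G y) := by
  by_contra hxy
  obtain ⟨U, hU, hUy, hUc⟩ := local_compact_nhds (isClosed_closure.isOpen_compl.mem_nhds hxy)
  obtain ⟨K, -, hKU⟩ := hx.exists_isCompact_closure_orbit_subset hU hUc
  obtain ⟨g, -, u, hu, rfl⟩ := hKU hy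
  exact hUy hu (subset_closure ⟨g⁻¹, inv_smul_smul g u⟩)

end AlmostPeriodic

theorem closure_orbit_subset_closure_orbit {M X : Type*} [Monoid M] [TopologicalSpace X]
    [MulAction M X] [ContinuousConstSMul M X] {x y : X} (hy : y ∈ closure (orbit M x)) :
    closure (orbit M y) ⊆ closure (orbit M x) := by
  refine closure_minimal ?_ isClosed_closure
  rintro _ ⟨g, rfl⟩
  exact smul_closure_orbit_subset g x (Set.smul_mem_smul_set hy)

theorem IsCompact.eventually_smul_set_subset {G X : Type*} [TopologicalSpace G]
    [TopologicalSpace X] [SMul G X] [ContinuousSMul G X] {C O : Set X} (hC : IsCompact C)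
    (hO : IsOpen O) {g₀ : G} (h : g₀ • C ⊆ O) : ∀ᶠ g in 𝓝 g₀, g • C ⊆ O := by
  have : ∀ᶠ g in 𝓝 g₀, ∀ c ∈ C, g • c ∈ O :=
    hC.eventually_forall_of_forall_eventually fun c hc =>
      continuous_smul.continuousAt.eventually (hO.mem_nhds (h (Set.smul_mem_smul_set hc)))
  filter_upwards [this] with g hg
  rintro _ ⟨c, hc, rfl⟩
  exact hg c hc

section Cocompact

variable {T X : Type*} [Group T] [TopologicalSpace T] [SeparatelyContinuousMul T]
  [TopologicalSpace X] [MulAction T X] [ContinuousSMul T X]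
  {H : Subgroup T} [CompactSpace (T ⧸ H)] {C : Set X}

theorem exists_finset_forall_smul_set_subset (hC : IsCompact C) (hHC : ∀ h : H, h • C ⊆ C)
    (O : T → Set X) (hO : ∀ t, IsOpen (O t)) (hCO : ∀ t, t • C ⊆ O t) :
    ∃ s : Finset T, ∀ g : T, ∃ t ∈ s, g • C ⊆ O t := by
  let V : T → Set T := fun t => interior {g | g • C ⊆ O t}
  have htV : ∀ t, t ∈ V t := fun t =>
    mem_interior_iff_mem_nhds.2 (hC.eventually_smul_set_subset (hO t) (hCO t))
  obtain ⟨s, hs⟩ := isCompact_univ.elim_finite_subcover (fun t => ((↑) : T → T ⧸ H) '' V t)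
    (fun t => QuotientGroup.isOpenMap_coe _ isOpen_interior)
    fun q _ => Set.mem_iUnion.2 ⟨q.out, q.out, htV q.out, q.out_eq⟩
  refine ⟨s, fun g => ?_⟩
  obtain ⟨t, hts, g', hg', hg'g⟩ := Set.mem_iUnion₂.1 (hs (Set.mem_univ (g : T ⧸ H)))
  refine ⟨t, hts, ?_⟩
  have hh : g'⁻¹ * g ∈ H := QuotientGroup.eq.1 hg'g
  calc g • C = g' • (g'⁻¹ * g) • C := by rw [smul_smul, mul_inv_cancel_left]
    _ ⊆ g' • C := Set.smul_set_mono (hHC ⟨_, hh⟩)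
    _ ⊆ O t := interior_subset hg'

variable [T2Space X]

theorem isClosed_iUnion_smul_set_of_cocompact (hC : IsCompact C) (hHC : ∀ h : H, h • C ⊆ C) :
    IsClosed (⋃ g : T, g • C) := by
  refine isOpen_compl_iff.1 (isOpen_iff_mem_nhds.2 fun z hz => ?_)
  have hdisj : ∀ t : T, Disjoint {z} (t • C) := fun t =>
    Set.disjoint_singleton_left.2 fun hzt => hz (Set.mem_iUnion.2 ⟨t, hzt⟩)
  choose U O hU hO hzU hCO hUO using fun t =>
    SeparatedNhds.of_isCompact_isCompact isCompact_singleton (hC.smul t) (hdisj t)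
  obtain ⟨s, hs⟩ := exists_finset_forall_smul_set_subset hC hHC O hO hCO
  refine mem_of_superset ((biInter_finset_mem s).2 fun t _ =>
    (hU t).mem_nhds (hzU t rfl)) fun w hw hwC => ?_
  obtain ⟨g, hg⟩ := Set.mem_iUnion.1 hwC
  obtain ⟨t, hts, hgt⟩ := hs g
  exact Set.disjoint_left.1 (hUO t) (Set.mem_iInter₂.1 hw t hts) (hgt hg)

theorem isCompact_iUnion_smul_set_of_cocompact [WeaklyLocallyCompactSpace X] (hC : IsCompact C)
    (hHC : ∀ h : H, h • C ⊆ C) : IsCompact (⋃ g : T, g • C) := by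
  choose N hN hCN using fun t : T => exists_compact_superset (hC.smul t)
  obtain ⟨s, hs⟩ := exists_finset_forall_smul_set_subset hC hHC _ (fun _ => isOpen_interior) hCN
  refine (s.finite_toSet.isCompact_biUnion fun t _ => hN t).of_isClosed_subset
    (isClosed_iUnion_smul_set_of_cocompact hC hHC) (Set.iUnion_subset fun g => ?_)
  obtain ⟨t, hts, hgt⟩ := hs g
  exact hgt.trans (interior_subset.trans (Set.subset_biUnion_of_mem (u := N) hts))

end Cocompact

theorem closure_orbit_eq_iUnion_smul_closure_orbit {T X : Type*} [Group T] [TopologicalSpace X]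
    [MulAction T X] [ContinuousConstSMul T X] (H : Subgroup T) (x : X)
    (h : IsClosed (⋃ g : T, g • closure (orbit H x))) :
    closure (orbit T x) = ⋃ g : T, g • closure (orbit H x) := by
  refine (closure_minimal ?_ h).antisymm (Set.iUnion_subset fun g => ?_)
  · rintro _ ⟨g, rfl⟩
    exact Set.mem_iUnion.2 ⟨g, Set.smul_mem_smul_set (subset_closure (mem_orbit_self x))⟩
  · exact (Set.smul_set_mono (closure_mono (orbit_subgroup_subset H x))).trans
      (smul_closure_orbit_subset g x)

theorem orbitClosure_compact_minimal_of_cocompact_general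
    {T X : Type*} [Group T] [TopologicalSpace T] [IsTopologicalGroup T]
    [TopologicalSpace X] [LocallyCompactSpace X] [T2Space X]
    [MulAction T X] [ContinuousSMul T X]
    (H : Subgroup T) (hcc : CompactSpace (T ⧸ H))
    (x : X) (hx : IsAlmostPeriodicPt H x) :
    IsCompact (closure (orbit T x)) ∧
      ∀ y ∈ closure (orbit T x), closure (orbit T y) = closure (orbit T x) := by
  have hC : IsCompact (closure (orbit H x)) := hx.isCompact_closure_orbit
  have hHC : ∀ h : H, h • closure (orbit H x) ⊆ closure (orbit H x) :=
    fun h => smul_closure_orbit_subset h x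
  have hE : closure (orbit T x) = ⋃ g : T, g • closure (orbit H x) :=
    closure_orbit_eq_iUnion_smul_closure_orbit H x (isClosed_iUnion_smul_set_of_cocompact hC hHC)
  refine ⟨hE ▸ isCompact_iUnion_smul_set_of_cocompact hC hHC, fun y hy => ?_⟩
  obtain ⟨g, c, hc, rfl⟩ := Set.mem_iUnion.1 (hE ▸ hy)
  have hcx : closure (orbit T c) ⊆ closure (orbit T x) :=
    closure_orbit_subset_closure_orbit (closure_mono (orbit_subgroup_subset H x) hc)
  have hxc : x ∈ closure (orbit T c) :=
    closure_mono (orbit_subgroup_subset H c) (hx.mem_closure_orbit_of_mem_closure_orbit hc)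
  rw [orbit_smul]
  exact hcx.antisymm (closure_orbit_subset_closure_orbit hxc)

/-- If `T` is a Hausdorff topological group acting continuously on a locally compact
Hausdorff space `X`, `H` is a co-compact closed subgroup of `T`, and `x` is almost
periodic for the restricted `H`-action, then `cl(T·x)` is compact and is a minimal set
for the `T`-action. -/
theorem orbitClosure_compact_minimal_of_cocompact
    {T X : Type*} [Group T] [TopologicalSpace T] [IsTopologicalGroup T] [T2Space T]
    [TopologicalSpace X] [LocallyCompactSpace X] [T2Space X]
    [MulAction T X] [ContinuousSMul T X]
    (H : Subgroup T) (hHclosed : IsClosed (H : Set T)) (hcc : CompactSpace (T ⧸ H))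
    (x : X) (hx : IsAlmostPeriodicPt H x) :
    IsCompact (closure (orbit T x)) ∧
      ∀ y ∈ closure (orbit T x), closure (orbit T y) = closure (orbit T x) :=
  orbitClosure_compact_minimal_of_cocompact_general H hcc x hx
end

section
/- Let T be a Hausdorff topological group acting continuously on a compact Hausdorff space X such that the action is minimal and proximal, and let H be a subnormal co-compact closed subgroup of T. Then the restricted action of H on X is minimal and proximal. -/
open MulAction

/-- `H` is a *subnormal* subgroup of `T`: there is a finite chain
`H = H₀ ◁ H₁ ◁ ⋯ ◁ Hₙ = T` with each term normal in the next. -/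
def Subgroup.IsSubnormal' {T : Type*} [Group T] (H : Subgroup T) : Prop :=
  ∃ (n : ℕ) (c : Fin (n + 1) → Subgroup T),
    c 0 = H ∧ c (Fin.last n) = ⊤ ∧
      ∀ i : Fin n, c i.castSucc ≤ c i.succ ∧ ((c i.castSucc).subgroupOf (c i.succ)).Normal

/-!
Proximality passes to any co-compact subgroup `K ≤ G`: for the `K`-orbit closure `C` of a pair,
`closure G • C` is closed, because it is the projection of a closed right-`K`-saturated subset of
`T × (X × X)`, which descends to `(T ⧸ K) × (X × X)` and is then projected along a compact factor.
So the `G`-orbit closure of the pair lies in `closure G • C`, and a diagonal point `g • c` in it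
yields the diagonal point `c ∈ C`.

Minimality passes to a proximal subgroup `K` normalised by `G`: proximality makes any two minimal
closed `K`-invariant sets meet, hence coincide. The unique minimal set is therefore fixed by every
`g ∈ G`, which maps minimal sets to minimal sets, so it is `G`-invariant and equals `X`.
Induction along the subnormal series combines the two.
-/

open scoped Pointwise

theorem Subgroup.IsSubnormal'.isSubnormal {T : Type*} [Group T] {H : Subgroup T}
    (h : H.IsSubnormal') : H.IsSubnormal := by
  obtain ⟨n, c, rfl, hlast, hstep⟩ := h
  have hc : ∀ i, (c i).IsSubnormal :=
    Fin.reverseInduction (hlast ▸ .top) fun i hi => .step _ _ (hstep i).1 hi (hstep i).2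
  exact hc 0

namespace MulAction

section Monoid

variable (M : Type*) {X : Type*} [Monoid M] [TopologicalSpace X] [MulAction M X]

variable (X) in
def IsProximal : Prop :=
  ∀ x₁ x₂ : X, (closure (orbit M (x₁, x₂)) ∩ Set.diagonal X).Nonempty

def IsMinimalSet (Y : Set X) : Prop :=
  Minimal (fun Y : Set X => Y.Nonempty ∧ IsClosed Y ∧ ∀ m : M, m • Y ⊆ Y) Y

theorem exists_isMinimalSet_subset [CompactSpace X] {S : Set X} (hne : S.Nonempty)
    (hS : IsClosed S) (hSM : ∀ m : M, m • S ⊆ S) : ∃ Y ⊆ S, IsMinimalSet M Y := by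
  refine zorn_superset_nonempty _ (fun c hc hchain hcne => ?_) S ⟨hne, hS, hSM⟩
  have : Nonempty c := hcne.to_subtype
  refine ⟨⋂₀ c, ⟨?_, isClosed_sInter fun Y hY => (hc hY).2.1, fun m => ?_⟩,
    fun Y => Set.sInter_subset_of_mem⟩
  · have hdir : DirectedOn (· ⊇ ·) c := fun Y hY Z hZ =>
      (hchain.total hY hZ).elim (fun h => ⟨Y, hY, subset_rfl, h⟩) fun h => ⟨Z, hZ, h, subset_rfl⟩
    exact IsCompact.nonempty_sInter_of_directed_nonempty_isCompact_isClosed hdir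
      (fun Y hY => (hc hY).1) (fun Y hY => (hc hY).2.1.isCompact) (fun Y hY => (hc hY).2.1)
  · exact Set.smul_set_subset_iff.2 fun x hx Y hY =>
      (hc hY).2.2 m (Set.smul_mem_smul_set (hx Y hY))

variable {M}

theorem IsProximal.eq_of_isMinimalSet (h : IsProximal M X) {Y Z : Set X}
    (hY : IsMinimalSet M Y) (hZ : IsMinimalSet M Z) : Y = Z := by
  obtain ⟨⟨y, hy⟩, hYc, hYM⟩ := hY.prop
  obtain ⟨⟨z, hz⟩, hZc, hZM⟩ := hZ.prop
  have horbit : closure (orbit M (y, z)) ⊆ Y ×ˢ Z := by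
    refine closure_minimal ?_ (hYc.prod hZc)
    rintro _ ⟨m, rfl⟩
    exact ⟨hYM m (Set.smul_mem_smul_set hy), hZM m (Set.smul_mem_smul_set hz)⟩
  obtain ⟨⟨a, b⟩, hab, hdiag⟩ := h y z
  obtain ⟨ha, hb⟩ := horbit hab
  obtain rfl : a = b := hdiag
  have hYZ : (Y ∩ Z).Nonempty ∧ IsClosed (Y ∩ Z) ∧ ∀ m : M, m • (Y ∩ Z) ⊆ Y ∩ Z :=
    ⟨⟨a, ha, hb⟩, hYc.inter hZc,
      fun m => Set.smul_set_inter_subset.trans (Set.inter_subset_inter (hYM m) (hZM m))⟩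
  rw [← hY.eq_of_subset hYZ Set.inter_subset_left, hZ.eq_of_subset hYZ Set.inter_subset_right]

end Monoid

section Group

variable {T X : Type*} [Group T] [MulAction T X]

theorem orbit_subgroup_top (x : X) : orbit (⊤ : Subgroup T) x = orbit T x := by
  ext y
  simp [mem_orbit_iff]

theorem smul_smul_set_subset_of_mem_normalizer {K : Subgroup T} {g : T}
    (hg : g ∈ Subgroup.normalizer (K : Set T)) {Y : Set X} (hY : ∀ k : K, k • Y ⊆ Y) (k : K) :
    k • g • Y ⊆ g • Y := by
  have hk : g⁻¹ * k * g ∈ K := (Subgroup.mem_normalizer_iff''.mp hg k).mp k.2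
  calc k • g • Y = g • (g⁻¹ * k * g) • Y := by
        change (k : T) • g • Y = _
        rw [smul_smul, smul_smul, mul_assoc, mul_inv_cancel_left]
    _ ⊆ g • Y := Set.smul_set_mono (hY ⟨_, hk⟩)

variable [TopologicalSpace X] [ContinuousConstSMul T X]

theorem IsMinimalSet.smul_of_mem_normalizer {K : Subgroup T} {Y : Set X}
    (hY : IsMinimalSet K Y) {g : T} (hg : g ∈ Subgroup.normalizer (K : Set T)) :
    IsMinimalSet K (g • Y) := by
  have hsmul : ∀ g ∈ Subgroup.normalizer (K : Set T), ∀ {Y : Set X},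
      Y.Nonempty ∧ IsClosed Y ∧ (∀ k : K, k • Y ⊆ Y) →
      (g • Y).Nonempty ∧ IsClosed (g • Y) ∧ ∀ k : K, k • g • Y ⊆ g • Y :=
    fun g hg Y hY => ⟨hY.1.smul_set, hY.2.1.smul g,
      smul_smul_set_subset_of_mem_normalizer hg hY.2.2⟩
  refine ⟨hsmul g hg hY.prop, fun Z hZ hZY => ?_⟩
  have hZY' : g⁻¹ • Z = Y :=
    hY.eq_of_subset (hsmul g⁻¹ (inv_mem hg) hZ) (Set.subset_smul_set_iff.1 hZY)
  rw [← hZY', smul_inv_smul]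

theorem isMinimal_of_le_normalizer [CompactSpace X] {K G : Subgroup T}
    (hGK : G ≤ Subgroup.normalizer (K : Set T)) [IsMinimal G X] (hK : IsProximal K X) :
    IsMinimal K X := by
  have : ContinuousConstSMul K X := ⟨fun k => continuous_const_smul (k : T)⟩
  refine (isMinimal_iff_isClosed_smul_invariant K).2 fun S hS hSK =>
    S.eq_empty_or_nonempty.imp_right fun hne => ?_
  obtain ⟨Y, hYS, hY⟩ := exists_isMinimalSet_subset K hne hS hSK
  have hYG : ∀ g : G, g • Y ⊆ Y := fun g =>
    (hK.eq_of_isMinimalSet (hY.smul_of_mem_normalizer (hGK g.2)) hY).subset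
  have hYuniv := (eq_empty_or_univ_of_smul_invariant_closed G hY.prop.2.1 hYG).resolve_left
    hY.prop.1.ne_empty
  exact Set.eq_univ_of_univ_subset (hYuniv ▸ hYS)

end Group

end MulAction

section TopologicalGroup

variable {T : Type*} [Group T] [TopologicalSpace T]

theorem compactSpace_quotient_of_le {H K : Subgroup T} (h : H ≤ K) [CompactSpace (T ⧸ H)] :
    CompactSpace (T ⧸ K) :=
  Function.Surjective.compactSpace (f := Subgroup.quotientMapOfLE h)
    ((QuotientGroup.isQuotientMap_mk H).continuous_iff.2 QuotientGroup.continuous_mk)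
    (QuotientGroup.mk_surjective.forall.2 fun t => ⟨t, rfl⟩)

variable [IsTopologicalGroup T]

theorem isClosed_image_snd_of_mul_mem {W : Type*} [TopologicalSpace W] (K : Subgroup T)
    [CompactSpace (T ⧸ K)] {E : Set (T × W)} (hE : IsClosed E)
    (hEK : ∀ p ∈ E, ∀ k ∈ K, (p.1 * k, p.2) ∈ E) : IsClosed (Prod.snd '' E) := by
  set f : T × W → (T ⧸ K) × W := Prod.map QuotientGroup.mk id
  have hf : IsOpenQuotientMap f := QuotientGroup.isOpenQuotientMap_mk.prodMap .id
  have hsat : f ⁻¹' (f '' E) = E := by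
    refine subset_antisymm ?_ (Set.subset_preimage_image f E)
    rintro ⟨t, w⟩ ⟨⟨s, w'⟩, hs, hst⟩
    simp only [f, Prod.map, id, Prod.mk.injEq, QuotientGroup.eq] at hst
    obtain ⟨hst, rfl⟩ := hst
    simpa using hEK _ hs _ hst
  have hfE : IsClosed (f '' E) :=
    hf.isQuotientMap.isCoinducing.isClosed_preimage.mp (by rwa [hsat])
  simpa [Set.image_image, f] using isClosedMap_snd_of_compactSpace _ hfE

theorem isClosed_subgroup_smul {W : Type*} [TopologicalSpace W] [MulAction T W]
    [ContinuousSMul T W] {K G : Subgroup T} [CompactSpace (T ⧸ K)] (hKG : K ≤ G)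
    (hG : IsClosed (G : Set T)) {C : Set W} (hC : IsClosed C) (hKC : ∀ k : K, k • C ⊆ C) :
    IsClosed ((G : Set T) • C) := by
  have hE : IsClosed {p : T × W | p.1 ∈ G ∧ p.1⁻¹ • p.2 ∈ C} :=
    (hG.preimage continuous_fst).inter (hC.preimage (continuous_fst.inv.smul continuous_snd))
  convert isClosed_image_snd_of_mul_mem K hE ?_ using 1
  · ext w
    constructor
    · rintro ⟨g, hg, c, hc, rfl⟩
      exact ⟨(g, g • c), ⟨hg, by simpa using hc⟩, rfl⟩
    · rintro ⟨⟨g, w⟩, ⟨hg, hw⟩, rfl⟩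
      exact ⟨g, hg, _, hw, smul_inv_smul g w⟩
  · rintro ⟨t, w⟩ ⟨ht, hw⟩ k hk
    refine ⟨mul_mem ht (hKG hk), ?_⟩
    rw [mul_inv_rev, mul_smul]
    exact hKC ⟨k⁻¹, inv_mem hk⟩ (Set.smul_mem_smul_set hw)

namespace MulAction

variable {X : Type*} [TopologicalSpace X] [MulAction T X] [ContinuousSMul T X]

theorem IsProximal.of_cocompact_le {K G : Subgroup T} [CompactSpace (T ⧸ K)] (hKG : K ≤ G)
    (hG : IsProximal G X) : IsProximal K X := by
  intro x₁ x₂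
  set C := closure (orbit K (x₁, x₂))
  have hGC : closure (orbit G (x₁, x₂)) ⊆ (G.topologicalClosure : Set T) • C := by
    refine closure_minimal ?_ (isClosed_subgroup_smul (hKG.trans G.le_topologicalClosure)
      G.isClosed_topologicalClosure isClosed_closure (smul_closure_orbit_subset · _))
    rintro _ ⟨g, rfl⟩
    exact Set.smul_mem_smul (G.le_topologicalClosure g.2) (subset_closure (mem_orbit_self _))
  obtain ⟨z, hzG, hz⟩ := hG x₁ x₂
  obtain ⟨g, -, ⟨c₁, c₂⟩, hc, rfl⟩ := hGC hzG
  exact ⟨(c₁, c₂), hc, smul_left_cancel g hz⟩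

theorem isMinimal_and_isProximal_of_isSubnormal [CompactSpace X] [IsMinimal T X]
    (hT : IsProximal T X)
    {H : Subgroup T} (hH : H.IsSubnormal) [CompactSpace (T ⧸ H)] :
    IsMinimal H X ∧ IsProximal H X := by
  revert ‹CompactSpace (T ⧸ H)›
  induction hH with
  | top =>
    intro
    refine ⟨⟨fun x => ?_⟩, fun x₁ x₂ => ?_⟩
    · simpa only [orbit_subgroup_top] using dense_orbit T x
    · simpa only [orbit_subgroup_top] using hT x₁ x₂
  | step H K hHK _ hN ih =>
    intro
    have : CompactSpace (T ⧸ K) := compactSpace_quotient_of_le hHK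
    have : IsMinimal K X := ih.1
    have hH : IsProximal H X := ih.2.of_cocompact_le hHK
    have hKH : K ≤ Subgroup.normalizer (H : Set T) :=
      (Subgroup.normal_subgroupOf_iff_le_normalizer hHK).1 hN
    exact ⟨isMinimal_of_le_normalizer hKH hH, hH⟩

end MulAction

end TopologicalGroup

theorem minimal_proximal_of_subnormal_cocompact_general
    {T X : Type*} [Group T] [TopologicalSpace T] [IsTopologicalGroup T]
    [TopologicalSpace X] [CompactSpace X] [MulAction T X] [ContinuousSMul T X]
    (hmin : ∀ x : X, Dense (orbit T x))
    (hprox : ∀ x₁ x₂ : X,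
      (closure (Set.range fun t : T => (t • x₁, t • x₂)) ∩ Set.diagonal X).Nonempty)
    (H : Subgroup T)
    (hcc : CompactSpace (T ⧸ H)) (hsub : H.IsSubnormal') :
    (∀ x : X, Dense (orbit H x)) ∧
      ∀ x₁ x₂ : X,
        (closure (Set.range fun s : H => (s • x₁, s • x₂)) ∩ Set.diagonal X).Nonempty := by
  have : IsMinimal T X := ⟨hmin⟩
  obtain ⟨hHmin, hHprox⟩ := isMinimal_and_isProximal_of_isSubnormal hprox hsub.isSubnormal
  exact ⟨hHmin.dense_orbit, hHprox⟩

/-- If the `T`-action on a compact Hausdorff space `X` is minimal and proximal and `H` is a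
subnormal co-compact closed subgroup of `T`, then the restricted `H`-action is minimal
and proximal. -/
theorem minimal_proximal_of_subnormal_cocompact
    {T X : Type*} [Group T] [TopologicalSpace T] [IsTopologicalGroup T] [T2Space T]
    [TopologicalSpace X] [CompactSpace X] [T2Space X] [MulAction T X] [ContinuousSMul T X]
    (hmin : ∀ x : X, Dense (orbit T x))
    (hprox : ∀ x₁ x₂ : X,
      (closure (Set.range fun t : T => (t • x₁, t • x₂)) ∩ Set.diagonal X).Nonempty)
    (H : Subgroup T) (hHclosed : IsClosed (H : Set T))
    (hcc : CompactSpace (T ⧸ H)) (hsub : H.IsSubnormal') :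
    (∀ x : X, Dense (orbit H x)) ∧
      ∀ x₁ x₂ : X,
        (closure (Set.range fun s : H => (s • x₁, s • x₂)) ∩ Set.diagonal X).Nonempty :=
  minimal_proximal_of_subnormal_cocompact_general hmin hprox H hcc hsub
end

section
/- Let T be an abelian Hausdorff topological group acting continuously and minimally on a compact Hausdorff space X, and let H be a co-compact closed subgroup of T. Then the x-envelope of H is independent of the base point: E_x[H] = E_y[H] for all x, y ∈ X. -/
/-!
Write `Q x` for the closure of the `H`-orbit of `x`. As `T` is abelian, `t • Q x = Q (t • x)`,
so `t • x ∈ Q x` iff `t • Q x ⊆ Q x`, and it suffices to show that all the sets `Q y` are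
translates of one another. Compactness of `T ⧸ H` is used twice. First, `T • Q w` is closed,
being the projection along the compact factor of a closed subset of `(T ⧸ H) × X`; by
minimality it is all of `X`. Second, since powers of any `s` return close to `H`, a closed
submonoid of `T` containing `H` is a group. Applied to `{t | t • Q x ⊆ Q x}`, this shows that
`Q q = Q x` whenever `q ∈ Q x`.
-/

open MulAction Set Filter Topology Pointwise

theorem exists_pow_mem_of_mem_nhds_one {G : Type*} [Group G] [TopologicalSpace G]
    [IsTopologicalGroup G] [CompactSpace G] (g : G) {U : Set G} (hU : U ∈ 𝓝 1) :
    ∃ k, 0 < k ∧ g ^ k ∈ U := by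
  obtain ⟨W, hW, hWU⟩ := exists_nhds_split_inv hU
  obtain ⟨c, hc⟩ := exists_clusterPt_of_compactSpace (map (g ^ ·) atTop)
  have hWc : (· * c) '' W ∈ 𝓝 c := by
    rw [← map_mul_right_nhds_one]
    exact image_mem_map hW
  have hfreq := frequently_atTop.mp (mapClusterPt_iff_frequently.mp hc _ hWc)
  obtain ⟨n₁, -, w₁, hw₁, hn₁⟩ := hfreq 0
  obtain ⟨n₂, hn, w₂, hw₂, hn₂⟩ := hfreq (n₁ + 1)
  refine ⟨n₂ - n₁, by omega, ?_⟩
  have hpow : g ^ (n₂ - n₁) = w₂ / w₁ := by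
    rw [pow_sub g (by omega), ← hn₁, ← hn₂, div_eq_mul_inv]
    group
  exact hpow ▸ hWU w₂ hw₂ w₁ hw₁

section Submonoid

variable {T : Type*} [CommGroup T] [TopologicalSpace T] [IsTopologicalGroup T]
  {H : Subgroup T} [CompactSpace (T ⧸ H)]

theorem Submonoid.inv_mem_of_isClosed_of_le {S : Submonoid T} (hS : IsClosed (S : Set T))
    (hHS : H.toSubmonoid ≤ S) {s : T} (hs : s ∈ S) : s⁻¹ ∈ S := by
  rw [← SetLike.mem_coe, ← hS.closure_eq, mem_closure_iff_nhds_one]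
  intro U hU
  obtain ⟨k, hk, v, hv, hvk⟩ := exists_pow_mem_of_mem_nhds_one (s : T ⧸ H)
    (QuotientGroup.isOpenMap_coe.image_mem_nhds hU)
  have hH : v⁻¹ * s ^ k ∈ H := QuotientGroup.eq.mp hvk
  -- this element of `S` is `v * s⁻¹`, which lies in `U * s⁻¹`
  refine ⟨s ^ (k - 1) * (v⁻¹ * s ^ k)⁻¹, S.mul_mem (S.pow_mem hs _) (hHS (H.inv_mem hH)), ?_⟩
  have hsk : s ^ k = s ^ (k - 1) * s := by rw [← pow_succ, Nat.sub_add_cancel hk]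
  convert hv using 1
  rw [hsk]
  simp [div_eq_mul_inv, mul_comm, mul_left_comm]

end Submonoid

namespace MulAction

variable (M : Type*) {X : Type*} [Monoid M] [MulAction M X]

def subsetStabilizer (Q : Set X) : Submonoid M where
  carrier := {m | m • Q ⊆ Q}
  one_mem' := by simp
  mul_mem' {a b} (ha : a • Q ⊆ Q) (hb : b • Q ⊆ Q) := show (a * b) • Q ⊆ Q by
    rw [mul_smul]
    exact (smul_set_mono hb).trans ha

variable {M}

theorem mem_subsetStabilizer {Q : Set X} {m : M} : m ∈ subsetStabilizer M Q ↔ m • Q ⊆ Q :=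
  Iff.rfl

theorem isClosed_subsetStabilizer [TopologicalSpace M] [TopologicalSpace X] [ContinuousSMul M X]
    {Q : Set X} (hQ : IsClosed Q) : IsClosed (subsetStabilizer M Q : Set M) := by
  have : (subsetStabilizer M Q : Set M) = ⋂ q ∈ Q, (· • q) ⁻¹' Q := by
    ext m
    simp [mem_subsetStabilizer, smul_set_subset_iff]
  rw [this]
  exact isClosed_biInter fun q _ => hQ.preimage (continuous_id.smul continuous_const)

end MulAction

theorem isClosed_iUnion_smul_of_compactSpace_quotient {T X : Type*} [Group T] [TopologicalSpace T]
    [IsTopologicalGroup T] [TopologicalSpace X] [MulAction T X] [ContinuousSMul T X]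
    {H : Subgroup T} [CompactSpace (T ⧸ H)] {Q : Set X} (hQ : IsClosed Q)
    (hHQ : ∀ h ∈ H, h • Q ⊆ Q) : IsClosed (⋃ s : T, s • Q) := by
  set π : T × X → (T ⧸ H) × X := Prod.map (↑) id
  set D := {p : T × X | p.1⁻¹ • p.2 ∈ Q}
  have hD : IsClosed D := hQ.preimage (by fun_prop)
  have hsat : π ⁻¹' (π '' D) = D := by
    refine Subset.antisymm ?_ (subset_preimage_image π D)
    rintro ⟨s, z⟩ ⟨⟨s', z'⟩, hD', he⟩
    obtain ⟨hs, hz : z' = z⟩ := Prod.ext_iff.mp he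
    show s⁻¹ • z ∈ Q
    rw [← hz]
    have hH : s'⁻¹ * s ∈ H := QuotientGroup.eq.mp hs
    have : s⁻¹ • z' = (s'⁻¹ * s)⁻¹ • s'⁻¹ • z' := by rw [smul_smul]; group
    exact this ▸ hHQ _ (H.inv_mem hH) (smul_mem_smul_set hD')
  have hclosed : IsClosed (π '' D) :=
    (QuotientGroup.isOpenQuotientMap_mk.prodMap .id).isQuotientMap.isClosed_preimage.mp
      (by rwa [hsat])
  have hunion : ⋃ s : T, s • Q = Prod.snd '' (π '' D) := by
    ext z
    simp [π, D, mem_smul_set_iff_inv_smul_mem]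
  exact hunion ▸ isClosedMap_snd_of_compactSpace _ hclosed

section OrbitClosure

variable {T X : Type*} [CommGroup T] [TopologicalSpace T] [TopologicalSpace X] [MulAction T X]
  [ContinuousSMul T X] (H : Subgroup T)

theorem smul_closure_orbit (t : T) (x : X) :
    t • closure (orbit H x) = closure (orbit H (t • x)) := by
  rw [← closure_smul, smul_orbit_eq_orbit_smul]

theorem smul_closure_orbit_subset_of_mem {h : T} (hh : h ∈ H) (x : X) :
    h • closure (orbit H x) ⊆ closure (orbit H x) :=
  smul_closure_orbit_subset (⟨h, hh⟩ : H) x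

theorem closure_orbit_subset_of_mem {x q : X} (hq : q ∈ closure (orbit H x)) :
    closure (orbit H q) ⊆ closure (orbit H x) := by
  refine closure_minimal ?_ isClosed_closure
  rintro _ ⟨h, rfl⟩
  exact smul_closure_orbit_subset h x (smul_mem_smul_set hq)

theorem smul_mem_closure_orbit_iff {t : T} {x : X} :
    t • x ∈ closure (orbit H x) ↔ t • closure (orbit H x) ⊆ closure (orbit H x) := by
  refine ⟨fun h => ?_, fun h => h (smul_mem_smul_set (subset_closure (mem_orbit_self x)))⟩
  rw [smul_closure_orbit]
  exact closure_orbit_subset_of_mem H h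

variable [IsTopologicalGroup T] [CompactSpace (T ⧸ H)]

theorem exists_inv_smul_mem_closure_orbit (hmin : ∀ x : X, Dense (orbit T x)) (w z : X) :
    ∃ s : T, s⁻¹ • z ∈ closure (orbit H w) := by
  have hclosed := isClosed_iUnion_smul_of_compactSpace_quotient (isClosed_closure (s := orbit H w))
    fun h hh => smul_closure_orbit_subset_of_mem H hh w
  have horbit : orbit T w ⊆ ⋃ s : T, s • closure (orbit H w) := by
    rintro _ ⟨t, rfl⟩
    exact mem_iUnion.mpr ⟨t, smul_mem_smul_set (subset_closure (mem_orbit_self w))⟩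
  have hz : z ∈ closure (orbit T w) := (hmin w).closure_eq ▸ mem_univ z
  obtain ⟨s, hs⟩ := mem_iUnion.mp (closure_minimal horbit hclosed hz)
  exact ⟨s, mem_smul_set_iff_inv_smul_mem.mp hs⟩

theorem closure_orbit_eq_of_mem (hmin : ∀ x : X, Dense (orbit T x)) {x q : X}
    (hq : q ∈ closure (orbit H x)) : closure (orbit H q) = closure (orbit H x) := by
  obtain ⟨s, hs⟩ := exists_inv_smul_mem_closure_orbit H hmin q x
  have hsub : s⁻¹ • closure (orbit H x) ⊆ closure (orbit H q) :=
    smul_closure_orbit H s⁻¹ x ▸ closure_orbit_subset_of_mem H hs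
  have hstab : s⁻¹ ∈ subsetStabilizer T (closure (orbit H x)) :=
    hsub.trans (closure_orbit_subset_of_mem H hq)
  have hs' : s • closure (orbit H x) ⊆ closure (orbit H x) := by
    simpa using mem_subsetStabilizer.mp <| Submonoid.inv_mem_of_isClosed_of_le
      (isClosed_subsetStabilizer isClosed_closure)
      (fun h hh => smul_closure_orbit_subset_of_mem H hh x) hstab
  refine (closure_orbit_subset_of_mem H hq).antisymm ?_
  calc closure (orbit H x) = s⁻¹ • s • closure (orbit H x) := (inv_smul_smul s _).symm
    _ ⊆ s⁻¹ • closure (orbit H x) := smul_set_mono hs'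
    _ ⊆ closure (orbit H q) := hsub

theorem exists_closure_orbit_eq_smul (hmin : ∀ x : X, Dense (orbit T x)) (x y : X) :
    ∃ s : T, closure (orbit H y) = s • closure (orbit H x) := by
  obtain ⟨s, hs⟩ := exists_inv_smul_mem_closure_orbit H hmin x y
  refine ⟨s, ?_⟩
  rw [← closure_orbit_eq_of_mem H hmin hs, smul_closure_orbit, smul_inv_smul]

end OrbitClosure

theorem envelope_basePoint_independent_general
    {T X : Type*} [CommGroup T] [TopologicalSpace T] [IsTopologicalGroup T]
    [TopologicalSpace X] [MulAction T X] [ContinuousSMul T X]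
    (hmin : ∀ x : X, Dense (orbit T x))
    (H : Subgroup T) (hcc : CompactSpace (T ⧸ H))
    (x y : X) :
    {t : T | t • x ∈ closure (orbit H x)} = {t : T | t • y ∈ closure (orbit H y)} := by
  ext t
  obtain ⟨s, hs⟩ := exists_closure_orbit_eq_smul H hmin x y
  simp only [mem_ofPred_eq, smul_mem_closure_orbit_iff]
  rw [hs, smul_comm t s, smul_set_subset_smul_set_iff]

/-- For an abelian Hausdorff topological group `T` acting continuously and minimally on a
compact Hausdorff space `X`, and a co-compact closed subgroup `H` of `T`, the envelope
`E_x[H] = {t | t • x ∈ cl(H·x)}` does not depend on the base point `x`. -/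
theorem envelope_basePoint_independent
    {T X : Type*} [CommGroup T] [TopologicalSpace T] [IsTopologicalGroup T] [T2Space T]
    [TopologicalSpace X] [CompactSpace X] [T2Space X] [MulAction T X] [ContinuousSMul T X]
    (hmin : ∀ x : X, Dense (orbit T x))
    (H : Subgroup T) (hHclosed : IsClosed (H : Set T)) (hcc : CompactSpace (T ⧸ H))
    (x y : X) :
    {t : T | t • x ∈ closure (orbit H x)} = {t : T | t • y ∈ closure (orbit H y)} :=
  envelope_basePoint_independent_general hmin H hcc x y
end

section
/- Let T be a Hausdorff topological group acting continuously on a compact Hausdorff space X, let x ∈ X, and let A be a normal syndetic closed subgroup of T. Then E_x[A] is a closed syndetic subgroup of T containing A, and cl(A·x) = cl(E_x[A]·x). -/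
/-!
Since `A` is normal, every `t ∈ E_x[A]` maps `cl(A·x)` into itself, so `E_x[A]` is a closed
submonoid of `T` containing `A`, hence a union of cosets of `A`. Its image in `T ⧸ A`, a compact
(as `A` is syndetic) Hausdorff (as `A` is closed) group, is a closed submonoid. A closed submonoid
`M` of a compact Hausdorff group is a subgroup: for `g ∈ M`, Ellis' lemma gives an idempotent in
the compact semigroup `M ∩ g • M ∋ g`; in a group it is `1`, so `g⁻¹ ∈ M`.
-/

open MulAction Pointwise

theorem Syndetic.mono {G : Type*} [Group G] [TopologicalSpace G] {A B : Set G}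
    (hA : Syndetic A) (hAB : A ⊆ B) : Syndetic B :=
  let ⟨K, hK, hKA⟩ := hA
  ⟨K, hK, Set.eq_univ_of_univ_subset (hKA ▸ Set.mul_subset_mul_left hAB)⟩

theorem Syndetic.compactSpace_quotient {G : Type*} [Group G] [TopologicalSpace G]
    [ContinuousInv G] {N : Subgroup G} (hN : Syndetic (N : Set G)) : CompactSpace (G ⧸ N) := by
  obtain ⟨K, hK, hKN⟩ := hN
  refine ⟨?_⟩
  convert hK.inv.image (QuotientGroup.continuous_mk (N := N))
  refine (Set.eq_univ_of_forall fun g => ?_).symm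
  induction g using QuotientGroup.induction_on with
  | H s =>
    obtain ⟨k, hk, n, hn, rfl⟩ : s ∈ K⁻¹ * (N : Set G) := hKN ▸ Set.mem_univ s
    exact ⟨k, hk, (QuotientGroup.mk_mul_of_mem k hn).symm⟩

theorem Submonoid.inv_mem_of_isClosed {G : Type*} [Group G] [TopologicalSpace G]
    [ContinuousMul G] [CompactSpace G] [T2Space G] (M : Submonoid G)
    (hM : IsClosed (M : Set G)) {g : G} (hg : g ∈ M) : g⁻¹ ∈ M := by
  set S : Set G := {h | h ∈ M ∧ g⁻¹ * h ∈ M}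
  have hS : IsClosed S :=
    hM.inter (hM.preimage (continuous_const_mul g⁻¹))
  obtain ⟨e, ⟨-, he⟩, hee⟩ := exists_idempotent_in_compact_subsemigroup
    continuous_mul_const S ⟨g, hg, by simp⟩ hS.isCompact
    (fun a ha b hb => ⟨M.mul_mem ha.1 hb.1, by simpa [mul_assoc] using M.mul_mem ha.2 hb.1⟩)
  rw [mul_eq_left.mp hee, mul_one] at he
  exact he

theorem Submonoid.inv_mem_of_isClosed_of_compactSpace_quotient {G : Type*} [Group G] [TopologicalSpace G]
    [IsTopologicalGroup G] (N : Subgroup G) [N.Normal] [CompactSpace (G ⧸ N)] [T2Space (G ⧸ N)]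
    (M : Submonoid G) (hM : IsClosed (M : Set G)) (hNM : (N : Set G) ⊆ M) {g : G} (hg : g ∈ M) :
    g⁻¹ ∈ M := by
  set M' := M.map (QuotientGroup.mk' N)
  have hpre : (QuotientGroup.mk : G → G ⧸ N) ⁻¹' M' = M := by
    refine Set.Subset.antisymm ?_ fun s hs => ⟨s, hs, rfl⟩
    rintro s ⟨m, hm, hms⟩
    have hn : m⁻¹ * s ∈ N := QuotientGroup.eq.mp hms
    simpa using M.mul_mem hm (hNM hn)
  have hM' : IsClosed (M' : Set (G ⧸ N)) := by
    rwa [← (QuotientGroup.isQuotientMap_mk N).isClosed_preimage, hpre]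
  rw [← SetLike.mem_coe, ← hpre]
  exact M'.inv_mem_of_isClosed hM' ⟨g, hg, rfl⟩

section Envelope

variable {T X : Type*} [Group T] [TopologicalSpace X] [MulAction T X]

instance Subgroup.continuousConstSMul [ContinuousConstSMul T X] {S : Subgroup T} :
    ContinuousConstSMul S X :=
  ⟨fun s => continuous_const_smul (s : T)⟩

def envelope (A : Subgroup T) (x : X) : Set T :=
  {t | t • x ∈ closure (orbit A x)}

variable (A : Subgroup T) (x : X)

theorem subset_envelope : (A : Set T) ⊆ envelope A x :=
  fun a ha => subset_closure ⟨⟨a, ha⟩, rfl⟩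

theorem closure_orbit_eq_closure_image_envelope :
    closure (orbit A x) = closure ((· • x) '' envelope A x) :=
  (closure_mono <| by rintro _ ⟨a, rfl⟩; exact ⟨a, subset_envelope A x a.2, rfl⟩).antisymm <|
    closure_minimal (Set.image_subset_iff.mpr fun _ ht => ht) isClosed_closure

theorem isClosed_envelope [TopologicalSpace T] [ContinuousSMul T X] : IsClosed (envelope A x) :=
  isClosed_closure.preimage (continuous_id.smul continuous_const)

variable [ContinuousConstSMul T X] [A.Normal]

theorem smul_closure_orbit_subset_of_mem_envelope {t : T} (ht : t ∈ envelope A x) :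
    t • closure (orbit A x) ⊆ closure (orbit A x) := by
  refine (smul_closure_subset t _).trans (closure_minimal ?_ isClosed_closure)
  rintro _ ⟨_, ⟨a, rfl⟩, rfl⟩
  show t • (a • x) ∈ _
  have hconj : t * a * t⁻¹ ∈ A := ‹A.Normal›.conj_mem a a.2 t
  have heq : t • (a • x) = (⟨t * a * t⁻¹, hconj⟩ : A) • (t • x) := by
    simp [Subgroup.smul_def, ← mul_smul]
  rw [heq]
  exact smul_closure_orbit_subset _ x ⟨_, ht, rfl⟩

def envelopeSubmonoid : Submonoid T where
  carrier := envelope A x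
  one_mem' := subset_envelope A x A.one_mem
  mul_mem' {s t} hs ht := by
    show (s * t) • x ∈ closure (orbit A x)
    rw [mul_smul]
    exact smul_closure_orbit_subset_of_mem_envelope A x hs ⟨_, ht, rfl⟩

theorem inv_mem_envelope [TopologicalSpace T] [IsTopologicalGroup T] [ContinuousSMul T X]
    (hAclosed : IsClosed (A : Set T)) (hAsyn : Syndetic (A : Set T)) {t : T}
    (ht : t ∈ envelope A x) : t⁻¹ ∈ envelope A x :=
  have := hAsyn.compactSpace_quotient
  have := hAclosed
  (envelopeSubmonoid A x).inv_mem_of_isClosed_of_compactSpace_quotient A (isClosed_envelope A x)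
    (subset_envelope A x) ht

end Envelope

theorem envelope_of_normal_syndetic_general
    {T X : Type*} [Group T] [TopologicalSpace T] [IsTopologicalGroup T]
    [TopologicalSpace X] [MulAction T X] [ContinuousSMul T X]
    (A : Subgroup T) [A.Normal] (hAclosed : IsClosed (A : Set T))
    (hAsyn : Syndetic (A : Set T)) (x : X) :
    (∃ E : Subgroup T, (E : Set T) = {t : T | t • x ∈ closure (orbit A x)}) ∧
    IsClosed {t : T | t • x ∈ closure (orbit A x)} ∧
    Syndetic {t : T | t • x ∈ closure (orbit A x)} ∧
    (A : Set T) ⊆ {t : T | t • x ∈ closure (orbit A x)} ∧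
    closure (orbit A x) =
      closure ((fun t : T => t • x) '' {t : T | t • x ∈ closure (orbit A x)}) :=
  ⟨⟨{ envelopeSubmonoid A x with inv_mem' := inv_mem_envelope A x hAclosed hAsyn }, rfl⟩,
    isClosed_envelope A x, hAsyn.mono (subset_envelope A x), subset_envelope A x,
    closure_orbit_eq_closure_image_envelope A x⟩

/-- For `A` a normal syndetic closed subgroup of `T` and `x ∈ X`, the envelope
`E_x[A] = {t | t • x ∈ cl(A·x)}` is a closed syndetic subgroup of `T` containing `A`,
and `cl(A·x) = cl(E_x[A]·x)`. -/
theorem envelope_of_normal_syndetic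
    {T X : Type*} [Group T] [TopologicalSpace T] [IsTopologicalGroup T] [T2Space T]
    [TopologicalSpace X] [CompactSpace X] [T2Space X] [MulAction T X] [ContinuousSMul T X]
    (A : Subgroup T) [A.Normal] (hAclosed : IsClosed (A : Set T))
    (hAsyn : Syndetic (A : Set T)) (x : X) :
    (∃ E : Subgroup T, (E : Set T) = {t : T | t • x ∈ closure (orbit A x)}) ∧
    IsClosed {t : T | t • x ∈ closure (orbit A x)} ∧
    Syndetic {t : T | t • x ∈ closure (orbit A x)} ∧
    (A : Set T) ⊆ {t : T | t • x ∈ closure (orbit A x)} ∧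
    closure (orbit A x) =
      closure ((fun t : T => t • x) '' {t : T | t • x ∈ closure (orbit A x)}) :=
  envelope_of_normal_syndetic_general A hAclosed hAsyn x
end

section
/- Let T be a Hausdorff topological group acting continuously and minimally on a compact Hausdorff space X, let H be a normal co-compact closed subgroup of T, and let x ∈ X. Let X/H denote the quotient of X by the closed T-invariant equivalence relation R_H = {(x,x') : x' ∈ cl(H·x)}, with T acting by t·[y] = [t·y]. Then the evaluation map 𝔢 : T/E_x[H] → X/H, t·E_x[H] ↦ [t·x] (the class of cl(H·(t·x))), is a well-defined T-equivariant homeomorphism, and consequently the T-action on X/H is a minimal equicontinuous (almost periodic) factor of the flow on X. -/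
/-!
Normality of `H` gives `cl(H·(t·x)) = t·cl(H·x)`, so the `R_H`-classes are the translates of
`cl(H·x)` and `tE ↦ [t·x]` is well defined and injective. Since `T/H` is compact, the projection
`T × Z → Z` maps closed sets that are saturated under right multiplication by `H` to closed sets.
This makes the evaluation map closed, hence, its range being dense by minimality, a homeomorphism.
It also makes the action of `T` on `T/E`, on which `H` acts trivially, equicontinuous, and the
evaluation map carries this equicontinuity over to `X/H`.
-/

open MulAction Set Topology Pointwise

theorem isClosed_setOf_exists_of_mul_mem {T Z : Type*} [Group T] [TopologicalSpace T]
    [SeparatelyContinuousMul T] [TopologicalSpace Z] {H : Subgroup T} [CompactSpace (T ⧸ H)]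
    {W : Set (T × Z)} (hW : IsClosed W)
    (hWH : ∀ t z, (t, z) ∈ W → ∀ h ∈ H, (t * h, z) ∈ W) :
    IsClosed {z | ∃ t, (t, z) ∈ W} := by
  set f : T × Z → (T ⧸ H) × Z := Prod.map QuotientGroup.mk id
  have hf : IsOpenQuotientMap f := QuotientGroup.isOpenQuotientMap_mk.prodMap .id
  have hsat : f ⁻¹' (f '' W) = W := by
    refine (subset_preimage_image f W).antisymm' ?_
    rintro ⟨t, z⟩ ⟨⟨t', z'⟩, hW', hff'⟩
    obtain ⟨htt', rfl : z' = z⟩ := Prod.ext_iff.mp hff'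
    simpa using hWH t' z' hW' _ (QuotientGroup.eq.mp htt')
  have hfW : IsClosed (f '' W) := hf.isQuotientMap.isCoinducing.isClosed_preimage.mp (by rwa [hsat])
  convert isClosedMap_snd_of_compactSpace _ hfW using 1
  ext z
  simp [f]

theorem isOpen_setOf_forall_smul_mem {T Y : Type*} [Group T] [TopologicalSpace T]
    [SeparatelyContinuousMul T] [TopologicalSpace Y] [MulAction T Y] [ContinuousSMul T Y]
    {H : Subgroup T} [CompactSpace (T ⧸ H)] (hH : ∀ h ∈ H, ∀ y : Y, h • y = y)
    {O : Set (Y × Y)} (hO : IsOpen O) :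
    IsOpen {p : Y × Y | ∀ g : T, (g • p.1, g • p.2) ∈ O} := by
  have hclosed := isClosed_setOf_exists_of_mul_mem (H := H)
    (W := {q : T × (Y × Y) | (q.1 • q.2.1, q.1 • q.2.2) ∈ Oᶜ})
    (hO.isClosed_compl.preimage (by fun_prop))
    (fun t p hp h hh => by simpa [mul_smul, hH h hh] using hp)
  simpa [← isClosed_compl_iff, compl_ofPred] using hclosed

theorem exists_mem_nhdsSet_diagonal_forall_smul_mem {T Y : Type*} [Group T] [TopologicalSpace T]
    [SeparatelyContinuousMul T] [TopologicalSpace Y] [MulAction T Y] [ContinuousSMul T Y]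
    {H : Subgroup T} [CompactSpace (T ⧸ H)] (hH : ∀ h ∈ H, ∀ y : Y, h • y = y)
    {ε : Set (Y × Y)} (hε : ε ∈ 𝓝ˢ (diagonal Y)) :
    ∃ δ ∈ 𝓝ˢ (diagonal Y), ∀ p ∈ δ, ∀ g : T, (g • p.1, g • p.2) ∈ ε := by
  obtain ⟨O, hO, hdiagO, hOε⟩ := mem_nhdsSet_iff_exists.mp hε
  refine ⟨_, (isOpen_setOf_forall_smul_mem hH hO).mem_nhdsSet.mpr ?_, fun p hp g => hOε (hp g)⟩
  rintro ⟨y, _⟩ (rfl : y = _) g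
  exact hdiagO rfl

theorem QuotientGroup.smul_eq_self_of_le {T : Type*} [Group T] {H E : Subgroup T} [H.Normal]
    (hHE : H ≤ E) {h : T} (hh : h ∈ H) (q : T ⧸ E) : h • q = q := by
  induction q using QuotientGroup.induction_on with
  | H t =>
    rw [MulAction.Quotient.smul_mk, QuotientGroup.eq]
    apply hHE
    simpa [mul_assoc] using Subgroup.Normal.conj_mem ‹_› h⁻¹ (inv_mem hh) t⁻¹

section NormalOrbitClosure

variable {T X : Type*} [Group T] [MulAction T X] [TopologicalSpace X]

theorem le_of_forall_mem_iff_smul_mem_closure_orbit {H E : Subgroup T} {x : X}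
    (hE : ∀ t, t ∈ E ↔ t • x ∈ closure (orbit H x)) : H ≤ E :=
  fun h hh => (hE h).mpr (subset_closure (mem_orbit x (⟨h, hh⟩ : H)))

theorem smul_mem_closure_orbit [ContinuousConstSMul T X] {H : Subgroup T} {h : T} (hh : h ∈ H)
    {a b : X} (hb : b ∈ closure (orbit H a)) : h • b ∈ closure (orbit H a) :=
  map_mem_closure (continuous_const_smul h) hb fun _ => mem_orbit_of_mem_orbit (⟨h, hh⟩ : H)

variable [ContinuousConstSMul T X] (H : Subgroup T) [H.Normal]

theorem closure_orbit_smul_of_normal (g : T) (a : X) :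
    closure (orbit H (g • a)) = g • closure (orbit H a) := by
  rw [← smul_orbit_eq_orbit_smul, closure_smul]

theorem mem_closure_orbit_smul_iff {g : T} {a b : X} :
    b ∈ closure (orbit H (g • a)) ↔ g⁻¹ • b ∈ closure (orbit H a) := by
  rw [closure_orbit_smul_of_normal, mem_smul_set_iff_inv_smul_mem]

theorem smul_mem_closure_orbit_smul (g : T) {a b : X} (hb : b ∈ closure (orbit H a)) :
    g • b ∈ closure (orbit H (g • a)) := by
  rw [closure_orbit_smul_of_normal]
  exact smul_mem_smul_set hb

end NormalOrbitClosure

section EnvelopeEval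

variable {T X : Type*} [Group T] [MulAction T X] [TopologicalSpace X] [ContinuousConstSMul T X]
  {H : Subgroup T} [H.Normal] {s : Setoid X} (hs : ∀ a b, s.r a b ↔ b ∈ closure (orbit H a))
  {x : X} {E : Subgroup T} (hE : ∀ t, t ∈ E ↔ t • x ∈ closure (orbit H x))

def envelopeEval : T ⧸ E → Quotient s :=
  Quotient.map' (· • x) fun a b hab => (hs _ _).mpr <| (mem_closure_orbit_smul_iff H).mpr <| by
    rw [smul_smul]
    exact (hE _).mp (QuotientGroup.leftRel_apply.mp hab)

theorem envelopeEval_mk (t : T) : envelopeEval hs hE (t : T ⧸ E) = Quotient.mk s (t • x) := rfl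

theorem envelopeEval_smul_of_eq {u : T ⧸ E} {a : X} (hua : envelopeEval hs hE u = Quotient.mk s a)
    (g : T) : envelopeEval hs hE (g • u) = Quotient.mk s (g • a) := by
  induction u using QuotientGroup.induction_on with
  | H t =>
    rw [MulAction.Quotient.smul_mk, envelopeEval_mk, smul_eq_mul, mul_smul]
    exact Quotient.sound <| (hs _ _).mpr <| smul_mem_closure_orbit_smul H g <|
      (hs _ _).mp (Quotient.exact hua)

theorem envelopeEval_injective : Function.Injective (envelopeEval hs hE) := by
  refine fun q q' => Quotient.inductionOn₂' q q' fun t t' htt' => Quotient.sound' ?_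
  rw [QuotientGroup.leftRel_apply, hE, mul_smul]
  exact (mem_closure_orbit_smul_iff H).mp ((hs _ _).mp (Quotient.exact htt'))

end EnvelopeEval

section EnvelopeEvalTopology

variable {T X : Type*} [Group T] [TopologicalSpace T] [MulAction T X] [TopologicalSpace X]
  [ContinuousSMul T X] {H : Subgroup T} [H.Normal] {s : Setoid X}
  (hs : ∀ a b, s.r a b ↔ b ∈ closure (orbit H a))
  {x : X} {E : Subgroup T} (hE : ∀ t, t ∈ E ↔ t • x ∈ closure (orbit H x))

theorem continuous_envelopeEval : Continuous (envelopeEval hs hE) :=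
  (QuotientGroup.isQuotientMap_mk E).continuous_iff.mpr <|
    continuous_quot_mk.comp (continuous_id.smul continuous_const)

variable [IsTopologicalGroup T] [CompactSpace (T ⧸ H)]

theorem isClosedMap_envelopeEval : IsClosedMap (envelopeEval hs hE) := by
  intro K hK
  have hpre : Quotient.mk s ⁻¹' (envelopeEval hs hE '' K) =
      {a | ∃ t, (t, a) ∈ {p : T × X | (p.1 : T ⧸ E) ∈ K ∧ p.1⁻¹ • p.2 ∈ closure (orbit H x)}} := by
    ext a
    simp only [mem_preimage, mem_image, mem_ofPred_eq, QuotientGroup.mk_surjective.exists,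
      envelopeEval_mk, Quotient.eq, hs, mem_closure_orbit_smul_iff]
  have hq : IsQuotientMap (Quotient.mk s) := isQuotientMap_quotient_mk'
  rw [← hq.isCoinducing.isClosed_preimage, hpre]
  refine isClosed_setOf_exists_of_mul_mem (H := H)
    ((hK.preimage (QuotientGroup.continuous_mk.comp continuous_fst)).inter
      (isClosed_closure.preimage (by fun_prop))) ?_
  rintro t a ⟨htK, hta⟩ h hh
  have hhE : h ∈ E := le_of_forall_mem_iff_smul_mem_closure_orbit hE hh
  refine ⟨by rwa [QuotientGroup.mk_mul_of_mem t hhE], ?_⟩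
  rw [mul_inv_rev, mul_smul]
  exact smul_mem_closure_orbit (inv_mem hh) hta

theorem envelopeEval_surjective (hx : Dense (orbit T x)) :
    Function.Surjective (envelopeEval hs hE) := by
  have hdense : Dense (range (envelopeEval hs hE)) := by
    refine (Quotient.mk_surjective.denseRange.dense_image continuous_quot_mk hx).mono ?_
    rintro _ ⟨_, ⟨t, rfl⟩, rfl⟩
    exact ⟨t, rfl⟩
  rw [← range_eq_univ, ← (isClosedMap_envelopeEval hs hE).isClosed_range.closure_eq,
    hdense.closure_eq]

theorem isHomeomorph_envelopeEval (hx : Dense (orbit T x)) :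
    IsHomeomorph (envelopeEval hs hE) :=
  isHomeomorph_iff_continuous_isClosedMap_bijective.mpr ⟨continuous_envelopeEval hs hE,
    isClosedMap_envelopeEval hs hE, envelopeEval_injective hs hE, envelopeEval_surjective hs hE hx⟩

end EnvelopeEvalTopology

theorem exists_mem_nhdsSet_diagonal_forall_mk_smul_mem {T X : Type*} [Group T]
    [TopologicalSpace T] [IsTopologicalGroup T] [MulAction T X] [TopologicalSpace X]
    [ContinuousSMul T X] {H : Subgroup T} [H.Normal] [CompactSpace (T ⧸ H)] {s : Setoid X}
    (hs : ∀ a b, s.r a b ↔ b ∈ closure (orbit H a)) {x : X} (hx : Dense (orbit T x))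
    {E : Subgroup T} (hE : ∀ t, t ∈ E ↔ t • x ∈ closure (orbit H x))
    {ε : Set (Quotient s × Quotient s)} (hε : ε ∈ 𝓝ˢ (diagonal (Quotient s))) :
    ∃ δ ∈ 𝓝ˢ (diagonal (Quotient s)), ∀ a b : X, (Quotient.mk s a, Quotient.mk s b) ∈ δ →
      ∀ t : T, (Quotient.mk s (t • a), Quotient.mk s (t • b)) ∈ ε := by
  set Φ := (isHomeomorph_envelopeEval hs hE hx).homeomorph
  have hΦ {u : T ⧸ E} {a : X} (hua : Φ.symm (Quotient.mk s a) = u) (t : T) :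
      Φ (t • u) = Quotient.mk s (t • a) :=
    envelopeEval_smul_of_eq hs hE (by rw [← hua]; exact Φ.apply_symm_apply _) t
  have hε' : Prod.map Φ Φ ⁻¹' ε ∈ 𝓝ˢ (diagonal (T ⧸ E)) :=
    (Φ.continuous.prodMap Φ.continuous).tendsto_nhdsSet (fun _ => congrArg Φ) hε
  obtain ⟨δ, hδ, hδε⟩ := exists_mem_nhdsSet_diagonal_forall_smul_mem
    (fun h hh => QuotientGroup.smul_eq_self_of_le
      (le_of_forall_mem_iff_smul_mem_closure_orbit hE) hh) hε'
  have hδ' : Prod.map Φ.symm Φ.symm ⁻¹' δ ∈ 𝓝ˢ (diagonal (Quotient s)) :=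
    (Φ.symm.continuous.prodMap Φ.symm.continuous).tendsto_nhdsSet (fun _ => congrArg Φ.symm) hδ
  refine ⟨_, hδ', fun a b hab t => ?_⟩
  simpa only [mem_preimage, Prod.map_apply, hΦ rfl] using hδε _ hab t

theorem quotient_flow_isomorphic_to_coset_flow_general
    {T X : Type*} [Group T] [TopologicalSpace T] [IsTopologicalGroup T]
    [TopologicalSpace X] [MulAction T X] [ContinuousSMul T X]
    (hmin : ∀ y : X, Dense (orbit T y))
    (H : Subgroup T) [H.Normal]
    (hcc : CompactSpace (T ⧸ H)) (x : X)
    (hEquiv : Equivalence fun a b : X => b ∈ closure (orbit H a))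
    (E : Subgroup T) (hE : (E : Set T) = {t : T | t • x ∈ closure (orbit H x)}) :
    let s : Setoid X := ⟨fun a b : X => b ∈ closure (orbit H a), hEquiv⟩
    -- the `T`-action descends to `X/H`
    (∀ (g : T) (a b : X), s.r a b → s.r (g • a) (g • b)) ∧
    -- the evaluation map is a well-defined `T`-equivariant homeomorphism
    (∃ e : T ⧸ E → Quotient s,
      (∀ t : T, e (QuotientGroup.mk t) = Quotient.mk s (t • x)) ∧
      (∀ g t : T, e (g • (QuotientGroup.mk t : T ⧸ E)) = Quotient.mk s (g • (t • x))) ∧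
      IsHomeomorph e) ∧
    -- `X/H` is a factor of `X`: the quotient map is continuous, surjective, equivariant
    Continuous (Quotient.mk s) ∧ Function.Surjective (Quotient.mk s) ∧
    -- the descended flow on `X/H` is minimal
    (∀ y : X, Dense (Quotient.mk s '' orbit T y)) ∧
    -- and equicontinuous (almost periodic)
    (∀ ε ∈ nhdsSet (Set.diagonal (Quotient s)), ∃ δ ∈ nhdsSet (Set.diagonal (Quotient s)),
      ∀ a b : X, (Quotient.mk s a, Quotient.mk s b) ∈ δ →
        ∀ t : T, (Quotient.mk s (t • a), Quotient.mk s (t • b)) ∈ ε) := by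
  intro s
  have hs : ∀ a b, s.r a b ↔ b ∈ closure (orbit H a) := fun _ _ => Iff.rfl
  have hE' : ∀ t, t ∈ E ↔ t • x ∈ closure (orbit H x) := fun t => Set.ext_iff.mp hE t
  exact ⟨fun g _ _ => smul_mem_closure_orbit_smul H g,
    ⟨envelopeEval hs hE', envelopeEval_mk hs hE', fun g t => envelopeEval_smul_of_eq hs hE' rfl g,
      isHomeomorph_envelopeEval hs hE' (hmin x)⟩,
    continuous_quot_mk, Quotient.mk_surjective,
    fun y => Quotient.mk_surjective.denseRange.dense_image continuous_quot_mk (hmin y),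
    fun _ hε => exists_mem_nhdsSet_diagonal_forall_mk_smul_mem hs (hmin x) hE' hε⟩

/-- Let the `T`-flow on the compact Hausdorff space `X` be minimal, `H` a normal co-compact
closed subgroup of `T`, and `x ∈ X`. Let `X/H` be the quotient of `X` by the (closed,
`T`-invariant) equivalence relation `R_H = {(a,b) | b ∈ cl(H·a)}`, and let `E` be the
envelope subgroup with carrier `E_x[H] = {t | t • x ∈ cl(H·x)}`. Then: the relation `R_H`
is `T`-invariant (so the `T`-action descends to `X/H`); the evaluation map
`𝔢 : T/E → X/H`, `tE ↦ [t • x]`, is a well-defined `T`-equivariant homeomorphism;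
the quotient map `X → X/H` is a continuous surjective factor map; and the descended
flow on `X/H` is minimal and equicontinuous (almost periodic), where the entourages of
the compact Hausdorff space `X/H` are the neighborhoods of the diagonal. -/
theorem quotient_flow_isomorphic_to_coset_flow
    {T X : Type*} [Group T] [TopologicalSpace T] [IsTopologicalGroup T] [T2Space T]
    [TopologicalSpace X] [CompactSpace X] [T2Space X] [MulAction T X] [ContinuousSMul T X]
    (hmin : ∀ y : X, Dense (orbit T y))
    (H : Subgroup T) [H.Normal] (hHclosed : IsClosed (H : Set T))
    (hcc : CompactSpace (T ⧸ H)) (x : X)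
    (hEquiv : Equivalence fun a b : X => b ∈ closure (orbit H a))
    (E : Subgroup T) (hE : (E : Set T) = {t : T | t • x ∈ closure (orbit H x)}) :
    let s : Setoid X := ⟨fun a b : X => b ∈ closure (orbit H a), hEquiv⟩
    -- the `T`-action descends to `X/H`
    (∀ (g : T) (a b : X), s.r a b → s.r (g • a) (g • b)) ∧
    -- the evaluation map is a well-defined `T`-equivariant homeomorphism
    (∃ e : T ⧸ E → Quotient s,
      (∀ t : T, e (QuotientGroup.mk t) = Quotient.mk s (t • x)) ∧
      (∀ g t : T, e (g • (QuotientGroup.mk t : T ⧸ E)) = Quotient.mk s (g • (t • x))) ∧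
      IsHomeomorph e) ∧
    -- `X/H` is a factor of `X`: the quotient map is continuous, surjective, equivariant
    Continuous (Quotient.mk s) ∧ Function.Surjective (Quotient.mk s) ∧
    -- the descended flow on `X/H` is minimal
    (∀ y : X, Dense (Quotient.mk s '' orbit T y)) ∧
    -- and equicontinuous (almost periodic)
    (∀ ε ∈ nhdsSet (Set.diagonal (Quotient s)), ∃ δ ∈ nhdsSet (Set.diagonal (Quotient s)),
      ∀ a b : X, (Quotient.mk s a, Quotient.mk s b) ∈ δ →
        ∀ t : T, (Quotient.mk s (t • a), Quotient.mk s (t • b)) ∈ ε) :=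
  quotient_flow_isomorphic_to_coset_flow_general hmin H hcc x hEquiv E hE
end

section
/- Let T be a Hausdorff topological group acting continuously and minimally on a compact Hausdorff space X, and let H be a normal co-compact closed subgroup of T. Let X/H denote the quotient of X by the equivalence relation R_H = {(x,x') : x' ∈ cl(H·x)}, with the induced T-action. Then X/H is not a single point (i.e., the T-flow X/H is a nontrivial factor of X) if and only if the diagonal T-action on X × T/H, given by t·(x, sH) = (t·x, tsH), is not minimal. -/
/-!
The orbit closure of `(x, H)` in `X × T/H` is `{(y, tH) | t⁻¹ • y ∈ cl(H • x)}`: one inclusion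
pushes `H • x` forward along `w ↦ (t • w, tH)`, the other lifts to `X × T` through the open
quotient map and pulls back along `(y, t) ↦ t⁻¹ • y`. As every point of `X × T/H` lies in the
`T`-orbit of some `(x, H)`, the product is minimal iff every `cl(H • x)` is all of `X`, i.e. iff
`R_H` identifies all points of `X`.
-/

open MulAction

section

variable {T X : Type*} [Group T] [TopologicalSpace T] [TopologicalSpace X] [MulAction T X]
  (H : Subgroup T)

theorem mem_closure_orbit_prod_of_mem_closure_orbit [ContinuousConstSMul T X] {x y : X} {t : T}
    (hy : t⁻¹ • y ∈ closure (orbit H x)) :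
    (y, (t : T ⧸ H)) ∈ closure (orbit T (x, ((1 : T) : T ⧸ H))) := by
  have hmaps : Set.MapsTo (fun w : X => (t • w, (t : T ⧸ H)))
      (orbit H x) (orbit T (x, ((1 : T) : T ⧸ H))) := by
    rintro _ ⟨h, rfl⟩
    refine ⟨t * h, Prod.ext (mul_smul _ _ _) ?_⟩
    simp
  simpa using map_mem_closure ((continuous_const_smul t).prodMk continuous_const) hy hmaps

theorem mem_closure_orbit_of_mem_closure_orbit_prod [IsTopologicalGroup T] [ContinuousSMul T X]
    {x y : X} {t : T} (hy : (y, (t : T ⧸ H)) ∈ closure (orbit T (x, ((1 : T) : T ⧸ H)))) :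
    t⁻¹ • y ∈ closure (orbit H x) := by
  set π : X × T → X × T ⧸ H := Prod.map id (↑)
  have hπ : π ⁻¹' closure (orbit T (x, ((1 : T) : T ⧸ H)))
      = closure (π ⁻¹' orbit T (x, ((1 : T) : T ⧸ H))) :=
    (IsOpenMap.id.prodMap QuotientGroup.isOpenMap_coe).preimage_closure_eq_closure_preimage
      (continuous_id.prodMap QuotientGroup.continuous_mk) _
  have hmaps : Set.MapsTo (fun p : X × T => p.2⁻¹ • p.1)
      (π ⁻¹' orbit T (x, ((1 : T) : T ⧸ H))) (orbit H x) := by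
    rintro ⟨_, u⟩ ⟨s, hs⟩
    simp only [π, Prod.map, Prod.smul_mk, Prod.mk.injEq] at hs
    obtain ⟨rfl, hsu⟩ := hs
    have hsuH : s⁻¹ * u ∈ H := by simpa [QuotientGroup.eq] using hsu
    refine ⟨⟨s⁻¹ * u, hsuH⟩⁻¹, ?_⟩
    change ((s⁻¹ * u)⁻¹ : T) • x = u⁻¹ • s • x
    rw [mul_inv_rev, inv_inv, mul_smul]
  have hy' : (y, t) ∈ π ⁻¹' closure (orbit T (x, ((1 : T) : T ⧸ H))) := hy
  rw [hπ] at hy'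
  exact map_mem_closure (f := fun p : X × T => p.2⁻¹ • p.1)
    (continuous_snd.inv.smul continuous_fst) hy' hmaps

variable [IsTopologicalGroup T] [ContinuousSMul T X]

theorem mem_closure_orbit_prod_iff {x y : X} {t : T} :
    (y, (t : T ⧸ H)) ∈ closure (orbit T (x, ((1 : T) : T ⧸ H))) ↔
      t⁻¹ • y ∈ closure (orbit H x) :=
  ⟨mem_closure_orbit_of_mem_closure_orbit_prod H, mem_closure_orbit_prod_of_mem_closure_orbit H⟩

theorem forall_dense_orbit_prod_iff :
    (∀ p : X × (T ⧸ H), Dense (orbit T p)) ↔ ∀ x y : X, y ∈ closure (orbit H x) := by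
  refine ⟨fun h x y => ?_, fun h => ?_⟩
  · simpa using
      (mem_closure_orbit_prod_iff H).mp (h (x, ((1 : T) : T ⧸ H)) (y, ((1 : T) : T ⧸ H)))
  · rintro ⟨x, s⟩ ⟨y, u⟩
    induction s using QuotientGroup.induction_on with | H s => ?_
    induction u using QuotientGroup.induction_on with | H u => ?_
    have hp : (x, (s : T ⧸ H)) = s • (s⁻¹ • x, ((1 : T) : T ⧸ H)) := by simp
    rw [hp, orbit_smul]
    exact (mem_closure_orbit_prod_iff H).mpr (h _ _)

end

theorem Quotient.exists_ne_iff {α : Type*} (s : Setoid α) :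
    (∃ q q' : Quotient s, q ≠ q') ↔ ¬ ∀ a b : α, s a b := by
  rw [← nontrivial_iff, ← not_subsingleton_iff_nontrivial, Quotient.subsingleton_iff,
    Setoid.eq_top_iff]

theorem quotient_nontrivial_iff_prod_not_minimal_general
    {T X : Type*} [Group T] [TopologicalSpace T] [IsTopologicalGroup T]
    [TopologicalSpace X]
    [MulAction T X] [ContinuousSMul T X]
    (H : Subgroup T)
    (hEquiv : Equivalence fun a b : X => b ∈ closure (orbit H a)) :
    (∃ q q' : Quotient (⟨fun a b : X => b ∈ closure (orbit H a), hEquiv⟩ : Setoid X),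
        q ≠ q') ↔
      ¬ (∀ p : X × (T ⧸ H), Dense (orbit T p)) := by
  rw [Quotient.exists_ne_iff, forall_dense_orbit_prod_iff]
  rfl

/-- For a minimal `T`-flow on a compact Hausdorff space `X` and a normal co-compact closed
subgroup `H` of `T`, the quotient `X/H` by the relation `R_H = {(a,b) | b ∈ cl(H·a)}` is a
nontrivial (non-singleton) factor of `X` iff the diagonal `T`-action on `X × T/H` is not
minimal. -/
theorem quotient_nontrivial_iff_prod_not_minimal
    {T X : Type*} [Group T] [TopologicalSpace T] [IsTopologicalGroup T] [T2Space T]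
    [TopologicalSpace X] [CompactSpace X] [T2Space X] [Nonempty X]
    [MulAction T X] [ContinuousSMul T X]
    (hmin : ∀ y : X, Dense (orbit T y))
    (H : Subgroup T) [H.Normal] (hHclosed : IsClosed (H : Set T))
    (hcc : CompactSpace (T ⧸ H))
    (hEquiv : Equivalence fun a b : X => b ∈ closure (orbit H a)) :
    (∃ q q' : Quotient (⟨fun a b : X => b ∈ closure (orbit H a), hEquiv⟩ : Setoid X),
        q ≠ q') ↔
      ¬ (∀ p : X × (T ⧸ H), Dense (orbit T p)) :=
  quotient_nontrivial_iff_prod_not_minimal_general H hEquiv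
end
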